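/- arXiv:1911.09350 — 5 statements merged into one kernel-verified Lean document; each statement's English description precedes it below -/
import Mathlib

section
/- Let m be an odd positive integer and let a(X), b(X) ∈ R_m. Set g_{a,b}(X) = gcd(a(X), b(X), X^m − 1) in (Z/2)[X] and h_{a,b}(X) = (X^m − 1)/g_{a,b}(X). Then the map sending c(X) in the ideal ⟨g_{a,b}(X)⟩ of R_m to (c(X)a(X), 2(c(X)b(X))) is an R_m-module isomorphism from ⟨g_{a,b}(X)⟩ onto C_{a,b}; in particular, the dimension of C_{a,b} as a vector space over Z/2 equals deg h_{a,b}(X). -/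
/-!
Since `m` is odd, `X^m - 1` is separable over `Z/2`, so `g` and `h = (X^m - 1)/g` are coprime
and the ideal `⟨g⟩` of `R_m` is generated by an idempotent `e = u g` (from `u g + v h = 1`).
By Bézout, `⟨g⟩` is also the ideal `⟨a, b⟩`. Hence on `⟨e⟩` the map `c ↦ (c a, c b)` is
injective (`c = c e` lies in `c ⟨a, b⟩`) and reaches every `(f a, f b) = (f e a, f e b)`; the
doubling map `R_m → R'_m` is injective, as it is computed on reduced representatives.
Finally `⟨g⟩ ≅ (Z/2)[X]/⟨h⟩` as modules, which has `2^(deg h)` elements.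
-/

open Polynomial

noncomputable section

/-- The polynomial `X^m - 1` over `Z/2`. -/
def fm (m : ℕ) : Polynomial (ZMod 2) := X ^ m - 1

/-- The polynomial `X^m - 1` over `Z/4`. -/
def fm4 (m : ℕ) : Polynomial (ZMod 4) := X ^ m - 1

/-- `R_m = (Z/2)[X]/⟨X^m - 1⟩`. -/
abbrev R2 (m : ℕ) : Type := Polynomial (ZMod 2) ⧸ Ideal.span {fm m}

/-- `R'_m = (Z/4)[X]/⟨X^m - 1⟩`. -/
abbrev R4 (m : ℕ) : Type := Polynomial (ZMod 4) ⧸ Ideal.span {fm4 m}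

def mk2 (m : ℕ) : Polynomial (ZMod 2) →+* R2 m := Ideal.Quotient.mk _

def mk4 (m : ℕ) : Polynomial (ZMod 4) →+* R4 m := Ideal.Quotient.mk _

/-- The canonical representative (of degree `< m`) of an element of `R2 m`. -/
def rep2 (m : ℕ) (r : R2 m) : Polynomial (ZMod 2) :=
  (Function.surjInv (Ideal.Quotient.mk_surjective (I := Ideal.span {fm m})) r) %ₘ fm m

/-- Coefficientwise doubling map `(Z/2)[X] → (Z/4)[X]`, `a ↦ 2a` on each coefficient. -/
def polyDbl (p : Polynomial (ZMod 2)) : Polynomial (ZMod 4) :=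
  ∑ i ∈ p.support, Polynomial.C (2 * ((p.coeff i).val : ZMod 4)) * X ^ i

/-- The additive embedding `R_m → R'_m`, `f ↦ 2f`. -/
def iota (m : ℕ) (r : R2 m) : R4 m := mk4 m (polyDbl (rep2 m r))

/-- The `Z2Z4`-additive cyclic code `C_{a,b} = {(f·a, 2(f·b)) : f ∈ R_m}`. -/
def Cab (m : ℕ) (a b : R2 m) : Set (R2 m × R4 m) :=
  {w | ∃ f : R2 m, w = (f * a, iota m (f * b))}

/-- Dimension of `C_{a,b}` as a vector space over `Z/2`, i.e. `log₂ |C_{a,b}|`. -/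
def dimCab (m : ℕ) (a b : R2 m) : ℕ := Nat.log 2 (Nat.card (Cab m a b))

section CommRing

variable {R : Type*} [CommRing R]

theorem bijOn_mul_pair_of_span_pair_eq {M : Type*} (φ : R → M) (hφ : Function.Injective φ)
    {a b e : R} (he : IsIdempotentElem e) (hab : Ideal.span {a, b} = Ideal.span {e}) :
    Set.BijOn (fun c => (c * a, φ (c * b))) (Ideal.span {e} : Set R)
      {w | ∃ f, w = (f * a, φ (f * b))} := by
  obtain ⟨a', rfl⟩ : e ∣ a := Ideal.mem_span_singleton.1 (hab ▸ Ideal.subset_span (by simp))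
  obtain ⟨b', rfl⟩ : e ∣ b := Ideal.mem_span_singleton.1 (hab ▸ Ideal.subset_span (by simp))
  obtain ⟨x, y, hxy⟩ := Ideal.mem_span_pair.1 (hab ▸ Ideal.mem_span_singleton_self e)
  refine ⟨fun c _ => ⟨c, rfl⟩, fun c hc c' hc' hcc' => ?_, ?_⟩
  · obtain ⟨hca, hcb⟩ := Prod.mk.inj hcc'
    replace hcb := hφ hcb
    obtain ⟨d, hd⟩ := Ideal.mem_span_singleton'.1 (Ideal.sub_mem _ hc hc')
    rw [← sub_eq_zero]
    calc c - c' = d * e * e := by rw [mul_assoc, he.eq, hd]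
      _ = d * e * (x * (e * a') + y * (e * b')) := by rw [hxy]
      _ = x * (c * (e * a') - c' * (e * a')) + y * (c * (e * b') - c' * (e * b')) := by
        rw [hd]; ring
      _ = 0 := by rw [hca, hcb]; ring
  · rintro _ ⟨f, rfl⟩
    have hfe (z : R) : f * e * (e * z) = f * (e * z) := by linear_combination f * z * he.eq
    exact ⟨f * e, Ideal.mul_mem_left _ _ (Ideal.mem_span_singleton_self e), by simp only [hfe]⟩

theorem exists_isIdempotentElem_span_singleton_map_eq {S : Type*} [CommRing S] (ψ : S →+* R)
    {g h : S} (hgh : IsCoprime g h) (hψ : ψ (g * h) = 0) :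
    ∃ e : R, IsIdempotentElem e ∧ Ideal.span {ψ g} = Ideal.span {e} := by
  obtain ⟨u, v, huv⟩ := hgh
  have hsum : ψ (u * g) + ψ (v * h) = 1 := by rw [← map_add, huv, map_one]
  have hprod (s : S) : ψ (s * g) * ψ (v * h) = 0 := by
    rw [← map_mul, show s * g * (v * h) = s * v * (g * h) by ring, map_mul, hψ, mul_zero]
  refine ⟨ψ (u * g), ?_, le_antisymm ?_ ?_⟩
  · unfold IsIdempotentElem
    linear_combination ψ (u * g) * hsum - hprod u
  · refine Ideal.span_singleton_le_span_singleton.2 ⟨ψ g, ?_⟩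
    have := hprod 1
    rw [one_mul] at this
    linear_combination -ψ g * hsum + this
  · exact Ideal.span_singleton_le_span_singleton.2 (map_dvd ψ (dvd_mul_left g u))

theorem span_pair_map_eq_span_map_gcd {E : Type*} [EuclideanDomain E] [DecidableEq E]
    (ψ : E →+* R) (A B : E) {f : E} (hf : ψ f = 0) :
    Ideal.span {ψ A, ψ B} = Ideal.span {ψ (EuclideanDomain.gcd A (EuclideanDomain.gcd B f))} := by
  set G := EuclideanDomain.gcd B f
  apply le_antisymm
  · rw [Ideal.span_le, Set.insert_subset_iff, Set.singleton_subset_iff]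
    refine ⟨Ideal.mem_span_singleton.2 (map_dvd ψ (EuclideanDomain.gcd_dvd_left A G)),
      Ideal.mem_span_singleton.2 (map_dvd ψ ?_)⟩
    exact (EuclideanDomain.gcd_dvd_right A G).trans (EuclideanDomain.gcd_dvd_left B f)
  · have hA := congrArg ψ (EuclideanDomain.gcd_eq_gcd_ab A G)
    have hB := congrArg ψ (EuclideanDomain.gcd_eq_gcd_ab B f)
    simp only [map_add, map_mul, hf, zero_mul, add_zero] at hA hB
    rw [Ideal.span_singleton_le_iff_mem, Ideal.mem_span_pair]
    exact ⟨ψ (EuclideanDomain.gcdA A G),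
      ψ (EuclideanDomain.gcdA B f) * ψ (EuclideanDomain.gcdB A G),
      by linear_combination -hA - ψ (EuclideanDomain.gcdB A G) * hB⟩

end CommRing

theorem natCard_span_singleton_mk_eq {S : Type*} [CommRing S] [IsDomain S] {f g h : S}
    (hf : f = g * h) (hg : g ≠ 0) :
    Nat.card (Ideal.span {Ideal.Quotient.mk (Ideal.span {f}) g} : Set (S ⧸ Ideal.span {f}))
      = Nat.card (S ⧸ Ideal.span {h}) := by
  set L := LinearMap.toSpanSingleton S (S ⧸ Ideal.span {f}) (Ideal.Quotient.mk _ g)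
  have hker : LinearMap.ker L = Ideal.span {h} := by
    ext p
    rw [LinearMap.mem_ker, LinearMap.toSpanSingleton_apply, Algebra.smul_def,
      Ideal.Quotient.algebraMap_eq, ← map_mul, Ideal.Quotient.eq_zero_iff_mem,
      Ideal.mem_span_singleton, Ideal.mem_span_singleton, hf, mul_comm p, mul_dvd_mul_iff_left hg]
  have hrange : (LinearMap.range L : Set (S ⧸ Ideal.span {f}))
      = Ideal.span {Ideal.Quotient.mk (Ideal.span {f}) g} := by
    rw [← LinearMap.span_singleton_eq_range,
      ← Submodule.restrictScalars_span (R := S) (A := S ⧸ Ideal.span {f})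
        Ideal.Quotient.mk_surjective]
    rfl
  rw [← hrange, ← hker]
  exact Nat.card_congr L.quotKerEquivRange.toEquiv.symm

namespace Polynomial

variable {R : Type*} [CommRing R] {n : ℕ}

theorem monic_X_pow_sub_one (hn : 0 < n) : (X ^ n - 1 : R[X]).Monic := by
  simpa using monic_X_pow_sub_C (1 : R) hn.ne'

theorem degree_X_pow_sub_one [Nontrivial R] (hn : 0 < n) : (X ^ n - 1 : R[X]).degree = n := by
  simpa using degree_X_pow_sub_C hn (1 : R)

end Polynomial

theorem AdjoinRoot.natCard_eq {K : Type*} [Field K] {h : K[X]} (hh : h ≠ 0) :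
    Nat.card (AdjoinRoot h) = Nat.card K ^ h.natDegree := by
  rw [Nat.card_congr (AdjoinRoot.powerBasis hh).basis.equivFun.toEquiv, Nat.card_fun,
    Nat.card_eq_fintype_card (α := Fin _), Fintype.card_fin, AdjoinRoot.powerBasis_dim]

section CyclicCode

theorem coeff_polyDbl (p : Polynomial (ZMod 2)) (n : ℕ) :
    (polyDbl p).coeff n = 2 * ((p.coeff n).val : ZMod 4) := by
  rw [polyDbl, finsetSum_coeff]
  simp only [coeff_C_mul, coeff_X_pow, mul_ite, mul_one, mul_zero, Finset.sum_ite_eq,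
    mem_support_iff]
  split_ifs with hn
  · rfl
  · simp [not_not.1 hn]

theorem polyDbl_add (p q : Polynomial (ZMod 2)) : polyDbl (p + q) = polyDbl p + polyDbl q := by
  ext n
  simp only [coeff_add, coeff_polyDbl]
  generalize p.coeff n = a, q.coeff n = b
  decide +revert

theorem polyDbl_sub (p q : Polynomial (ZMod 2)) : polyDbl (p - q) = polyDbl p - polyDbl q := by
  ext n
  simp only [coeff_sub, coeff_polyDbl]
  generalize p.coeff n = a, q.coeff n = b
  decide +revert

theorem polyDbl_eq_zero_iff {p : Polynomial (ZMod 2)} : polyDbl p = 0 ↔ p = 0 := by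
  simp only [Polynomial.ext_iff, coeff_polyDbl, coeff_zero]
  refine forall_congr' fun n => ?_
  generalize p.coeff n = a
  decide +revert

theorem degree_polyDbl_le (p : Polynomial (ZMod 2)) : (polyDbl p).degree ≤ p.degree := by
  refine degree_le_iff_coeff_zero _ _ |>.2 fun n hn => ?_
  rw [coeff_polyDbl, coeff_eq_zero_of_degree_lt hn, ZMod.val_zero, Nat.cast_zero, mul_zero]

variable {m : ℕ}

theorem squarefree_fm (hm : Odd m) : Squarefree (fm m) :=
  (X_pow_sub_one_separable_iff.2 <| by
    rwa [Ne, ZMod.natCast_eq_zero_iff_even, Nat.not_even_iff_odd]).squarefree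

theorem mk2_eq_mk2_iff {p q : Polynomial (ZMod 2)} : mk2 m p = mk2 m q ↔ fm m ∣ p - q := by
  rw [mk2, Ideal.Quotient.eq, Ideal.mem_span_singleton]

theorem rep2_mk2 (hm : 0 < m) (p : Polynomial (ZMod 2)) : rep2 m (mk2 m p) = p %ₘ fm m :=
  modByMonic_eq_of_dvd_sub (monic_X_pow_sub_one hm)
    (mk2_eq_mk2_iff.1 (Function.surjInv_eq Ideal.Quotient.mk_surjective (mk2 m p)))

theorem iota_mk2 (hm : 0 < m) (p : Polynomial (ZMod 2)) :
    iota m (mk2 m p) = mk4 m (polyDbl (p %ₘ fm m)) := by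
  rw [iota, rep2_mk2 hm]

theorem iota_add (hm : 0 < m) (x y : R2 m) : iota m (x + y) = iota m x + iota m y := by
  obtain ⟨p, rfl⟩ := Ideal.Quotient.mk_surjective x
  obtain ⟨q, rfl⟩ := Ideal.Quotient.mk_surjective y
  simp only [← map_add, ← mk2.eq_def, iota_mk2 hm, add_modByMonic, polyDbl_add]

theorem iota_injective (hm : 0 < m) : Function.Injective (iota m) := by
  have hf : (fm m).Monic := monic_X_pow_sub_one hm
  have hf4 : (fm4 m).Monic := monic_X_pow_sub_one hm
  intro x y hxy
  obtain ⟨p, rfl⟩ := Ideal.Quotient.mk_surjective x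
  obtain ⟨q, rfl⟩ := Ideal.Quotient.mk_surjective y
  rw [← mk2.eq_def, iota_mk2 hm, iota_mk2 hm, mk4, Ideal.Quotient.eq, Ideal.mem_span_singleton,
    ← polyDbl_sub, ← sub_modByMonic] at hxy
  have hlt : (polyDbl ((p - q) %ₘ fm m)).degree < (fm4 m).degree := by
    refine (degree_polyDbl_le _).trans_lt ((degree_modByMonic_lt _ hf).trans_eq ?_)
    have : Fact (1 < 4) := ⟨by norm_num⟩
    simp only [fm, fm4, degree_X_pow_sub_one hm]
  have hzero : polyDbl ((p - q) %ₘ fm m) = 0 := by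
    by_contra hne
    exact hf4.not_dvd_of_degree_lt hne hlt hxy
  rwa [polyDbl_eq_zero_iff, modByMonic_eq_zero_iff_dvd hf, ← mk2_eq_mk2_iff] at hzero

end CyclicCode

theorem statement0_general (m : ℕ) (hm : Odd m)
    (A B : Polynomial (ZMod 2))
    (g : Polynomial (ZMod 2))
    (hg : g = EuclideanDomain.gcd A (EuclideanDomain.gcd B (fm m)))
    (h : Polynomial (ZMod 2)) (hh : h = fm m / g) :
    Set.BijOn (fun c : R2 m => ((c * mk2 m A, iota m (c * mk2 m B)) : R2 m × R4 m))
      (↑(Ideal.span {mk2 m g} : Ideal (R2 m)) : Set (R2 m))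
      (Cab m (mk2 m A) (mk2 m B)) ∧
    (∀ c c' : R2 m,
      (((c + c') * mk2 m A, iota m ((c + c') * mk2 m B)) : R2 m × R4 m)
        = (c * mk2 m A, iota m (c * mk2 m B)) + (c' * mk2 m A, iota m (c' * mk2 m B))) ∧
    dimCab m (mk2 m A) (mk2 m B) = h.natDegree := by
  have hfm0 : fm m ≠ 0 := (monic_X_pow_sub_one hm.pos).ne_zero
  have hmk2_fm : mk2 m (fm m) = 0 := mk2_eq_mk2_iff.2 (by simp)
  have hg_dvd : g ∣ fm m :=
    hg ▸ (EuclideanDomain.gcd_dvd_right _ _).trans (EuclideanDomain.gcd_dvd_right _ _)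
  have hg0 : g ≠ 0 := ne_zero_of_dvd_ne_zero hfm0 hg_dvd
  have hfm : fm m = g * h := hh ▸ (EuclideanDomain.mul_div_cancel' hg0 hg_dvd).symm
  have hh0 : h ≠ 0 := right_ne_zero_of_mul (hfm ▸ hfm0)
  obtain ⟨e, he, hge⟩ := exists_isIdempotentElem_span_singleton_map_eq (mk2 m)
    (IsRelPrime.of_squarefree_mul (hfm ▸ squarefree_fm hm)).isCoprime (hfm ▸ hmk2_fm)
  have hbij : Set.BijOn _ _ (Cab m (mk2 m A) (mk2 m B)) :=
    bijOn_mul_pair_of_span_pair_eq (iota m) (iota_injective hm.pos) he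
      ((span_pair_map_eq_span_map_gcd (mk2 m) A B hmk2_fm).trans (hg ▸ hge))
  rw [← hge] at hbij
  refine ⟨hbij, fun c c' => ?_, ?_⟩
  · rw [add_mul, add_mul, iota_add hm.pos]
    rfl
  · rw [dimCab, Nat.card_congr (hbij.equiv _).symm, mk2, natCard_span_singleton_mk_eq hfm hg0,
      ← AdjoinRoot, AdjoinRoot.natCard_eq hh0, Nat.card_zmod, Nat.log_pow one_lt_two]

/-- For odd `m > 0` and `a = mk A`, `b = mk B` in `R_m`, with
`g = gcd(A, B, X^m-1)` and `h = (X^m-1)/g`, the map `c ↦ (c·a, 2(c·b))` is a bijection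
(indeed an `R_m`-module isomorphism, as the map is given by multiplication) from the ideal
`⟨g⟩` of `R_m` onto `C_{a,b}`; in particular `dim C_{a,b} = deg h`. -/
theorem statement0 (m : ℕ) (hm : Odd m) (hmpos : 0 < m)
    (A B : Polynomial (ZMod 2))
    (g : Polynomial (ZMod 2))
    (hg : g = EuclideanDomain.gcd A (EuclideanDomain.gcd B (fm m)))
    (h : Polynomial (ZMod 2)) (hh : h = fm m / g) :
    Set.BijOn (fun c : R2 m => ((c * mk2 m A, iota m (c * mk2 m B)) : R2 m × R4 m))
      (↑(Ideal.span {mk2 m g} : Ideal (R2 m)) : Set (R2 m))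
      (Cab m (mk2 m A) (mk2 m B)) ∧
    (∀ c c' : R2 m,
      (((c + c') * mk2 m A, iota m ((c + c') * mk2 m B)) : R2 m × R4 m)
        = (c * mk2 m A, iota m (c * mk2 m B)) + (c' * mk2 m A, iota m (c' * mk2 m B))) ∧
    dimCab m (mk2 m A) (mk2 m B) = h.natDegree :=
  statement0_general m hm A B g hg h hh

end
end

section
/- Let m be an odd positive integer and let a(X), b(X) ∈ J_m, where J_m is the ideal of R_m generated by X − 1. Then dim C_{a,b} ≤ m − 1; moreover, dim C_{a,b} < m − 1 if and only if there exists an irreducible factor p(X) of X^{m−1} + X^{m−2} + ⋯ + X + 1 in (Z/2)[X] such that p(X) divides a(X) and p(X) divides b(X). -/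
open Polynomial

noncomputable section

/-- The canonical representative (of degree `< m`) of an element of `R4 m`. -/
def rep4 (m : ℕ) (r : R4 m) : Polynomial (ZMod 4) :=
  (Function.surjInv (Ideal.Quotient.mk_surjective (I := Ideal.span {fm4 m})) r) %ₘ fm4 m

/-- Hamming weight of an element of `R_m` (of its coefficient vector). -/
def wt2 (m : ℕ) (r : R2 m) : ℕ := (rep2 m r).support.card

/-- Lee weight of an element of `Z/4`. -/
def lee (x : ZMod 4) : ℕ := min x.val (4 - x.val)

/-- Lee weight of an element of `R'_m` (of its coefficient vector). -/
def wtLee (m : ℕ) (r : R4 m) : ℕ := ∑ i ∈ (rep4 m r).support, lee ((rep4 m r).coeff i)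

/-- The augmentation ideal `J_m = ⟨X - 1⟩` of `R_m`. -/
def Jm (m : ℕ) : Ideal (R2 m) := Ideal.span {mk2 m (X - 1)}

/-- `(X^m - 1)/(X - 1) = X^{m-1} + ⋯ + X + 1` over `Z/2`. -/
def geomPoly (m : ℕ) : Polynomial (ZMod 2) := ∑ i ∈ Finset.range m, X ^ i

/-- `ℓ_m`: minimal degree of the irreducible factors of `(X^m-1)/(X-1)` in `(Z/2)[X]`. -/
def ell (m : ℕ) : ℕ :=
  sInf {d | ∃ p : Polynomial (ZMod 2), Irreducible p ∧ p ∣ geomPoly m ∧ p.natDegree = d}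

/-- The binary entropy function `H(x) = -x·log₂x - (1-x)·log₂(1-x)`. -/
def Hent (x : ℝ) : ℝ := -(x * Real.logb 2 x) - (1 - x) * Real.logb 2 (1 - x)


/-!
The code is the image of `R_m` under the `Z/2`-linear map `f ↦ (f a, f b)` followed by the
injective map `id × 2·`, so `dim C_{a,b} = m - dim K` with `K = {f : f a = f b = 0}`.
Write `g = (X^m - 1)/(X - 1)`. As `X - 1` divides `a` and `b`, `g ∈ K`, whence `dim K ≥ 1`.
If no irreducible factor of `g` divides both `a` and `b`, then `g` is coprime to `gcd(a, b)`, so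
every `f ∈ K` is a multiple of `g` of degree `< m`, i.e. `K = {0, g}` and `dim K = 1`.
Conversely, if `g = p c` with `p` irreducible dividing `a` and `b`, then `(X - 1) c` is a third
element of `K`; it differs from `g` because `X - 1 ∤ g` for odd `m`, and over `Z/2` three
elements force `dim K ≥ 2`.
-/

open Module

lemma Polynomial.Monic.eq_of_mk_eq_of_degree_lt {R : Type*} [CommRing R] [Nontrivial R]
    {f p q : R[X]} (hf : f.Monic) (hp : p.degree < f.degree) (hq : q.degree < f.degree)
    (h : Ideal.Quotient.mk (Ideal.span {f}) p = Ideal.Quotient.mk (Ideal.span {f}) q) :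
    p = q := by
  rw [Ideal.Quotient.mk_eq_mk_iff_sub_mem, Ideal.mem_span_singleton] at h
  have hlt : (p - q).degree < f.degree := (degree_sub_le p q).trans_lt (max_lt hp hq)
  rw [← sub_eq_zero, ← (modByMonic_eq_self_iff hf).2 hlt, (modByMonic_eq_zero_iff_dvd hf).2 h]

section ZModTwo

variable {V : Type*} [AddCommGroup V] [Module (ZMod 2) V] [Finite V]

lemma Submodule.natCard_eq_two_pow_finrank (W : Submodule (ZMod 2) V) :
    Nat.card W = 2 ^ finrank (ZMod 2) W := by
  have : Module.Finite (ZMod 2) W := Module.Finite.of_finite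
  rw [Module.natCard_eq_pow_finrank (K := ZMod 2), Nat.card_zmod]

lemma Submodule.finrank_le_one_of_subset_pair {W : Submodule (ZMod 2) V} {x : V}
    (hW : (W : Set V) ⊆ {0, x}) : finrank (ZMod 2) W ≤ 1 := by
  have hcard : Nat.card W ≤ 2 ^ 1 := by
    rw [← SetLike.coe_sort_coe, Nat.card_coe_set_eq]
    exact (Set.ncard_le_ncard hW).trans ((Set.ncard_insert_le _ _).trans (by simp))
  rwa [W.natCard_eq_two_pow_finrank, Nat.pow_le_pow_iff_right one_lt_two] at hcard

lemma Submodule.two_le_finrank_of_mem {W : Submodule (ZMod 2) V} {x y : V} (hx : x ∈ W)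
    (hy : y ∈ W) (hx0 : x ≠ 0) (hy0 : y ≠ 0) (hxy : x ≠ y) : 2 ≤ finrank (ZMod 2) W := by
  have hcard : 2 ^ 1 < Nat.card W := by
    rw [← SetLike.coe_sort_coe, Nat.card_coe_set_eq]
    have hsub : ({0, x, y} : Set V) ⊆ W := by
      rintro z (rfl | rfl | rfl) <;> simp_all
    refine lt_of_lt_of_le ?_ (Set.ncard_le_ncard hsub (Set.toFinite _))
    rw [Set.ncard_insert_of_notMem (by simp [hx0.symm, hy0.symm]), Set.ncard_pair hxy]
    norm_num
  rwa [W.natCard_eq_two_pow_finrank, Nat.pow_lt_pow_iff_right one_lt_two] at hcard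

end ZModTwo

namespace Z2Z4Code

variable {m : ℕ}

lemma fm_monic (hm : 0 < m) : (fm m).Monic := by
  simpa [fm] using monic_X_pow_sub_C (1 : ZMod 2) hm.ne'

lemma degree_fm (hm : 0 < m) : (fm m).degree = m := by
  simpa [fm] using degree_X_pow_sub_C (R := ZMod 2) hm 1

lemma natDegree_fm (m : ℕ) : (fm m).natDegree = m := by
  simpa [fm] using natDegree_X_pow_sub_C (R := ZMod 2) (n := m) (r := 1)

lemma fm4_monic (hm : 0 < m) : (fm4 m).Monic := by
  simpa [fm4] using monic_X_pow_sub_C (1 : ZMod 4) hm.ne'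

lemma degree_fm4 (hm : 0 < m) : (fm4 m).degree = m := by
  have : Nontrivial (ZMod 4) := ZMod.nontrivial_iff.2 (by norm_num)
  simpa [fm4] using degree_X_pow_sub_C (R := ZMod 4) hm 1

lemma X_sub_one_mul_geomPoly (m : ℕ) : (X - 1) * geomPoly m = fm m := by
  rw [mul_comm, geomPoly, fm, geom_sum_mul]

lemma geomPoly_ne_zero (hm : 0 < m) : geomPoly m ≠ 0 := by
  intro h
  simpa [← X_sub_one_mul_geomPoly, h] using (fm_monic hm).ne_zero

lemma natDegree_geomPoly (hm : 0 < m) : (geomPoly m).natDegree = m - 1 := by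
  have h := natDegree_mul (X_sub_C_ne_zero (1 : ZMod 2)) (geomPoly_ne_zero hm)
  rw [natDegree_X_sub_C, C_1, X_sub_one_mul_geomPoly, natDegree_fm] at h
  omega

lemma degree_geomPoly_lt (hm : 0 < m) : (geomPoly m).degree < m :=
  degree_le_natDegree.trans_lt <| by
    rw [natDegree_geomPoly hm]
    exact_mod_cast Nat.sub_lt hm one_pos

lemma not_X_sub_one_dvd_geomPoly (hm : Odd m) : ¬ (X - 1) ∣ geomPoly m := by
  rw [← C_1, dvd_iff_isRoot, IsRoot, geomPoly, eval_geom_sum]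
  simp [(ZMod.natCast_eq_zero_iff_even).not.2 (Nat.not_even_iff_odd.2 hm)]

lemma eq_zero_or_eq_geomPoly_of_dvd (hm : 0 < m) {F : (ZMod 2)[X]} (hF : F.degree < m)
    (hdvd : geomPoly m ∣ F) : F = 0 ∨ F = geomPoly m := by
  obtain ⟨c, rfl⟩ := hdvd
  rcases eq_or_ne c 0 with rfl | hc
  · exact Or.inl (mul_zero _)
  have hdeg := natDegree_lt_iff_degree_lt (mul_ne_zero (geomPoly_ne_zero hm) hc) |>.2 hF
  rw [natDegree_mul (geomPoly_ne_zero hm) hc, natDegree_geomPoly hm] at hdeg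
  obtain ⟨c₀, rfl⟩ := natDegree_eq_zero.1 (by omega : c.natDegree = 0)
  have hc₀ : c₀ = 1 := (by decide : ∀ u : ZMod 2, u ≠ 0 → u = 1) c₀ (by simpa using hc)
  simp [hc₀]

lemma rep2_eq_modByMonicHom (hm : 0 < m) (r : R2 m) :
    rep2 m r = AdjoinRoot.modByMonicHom (fm_monic hm) r := by
  rw [rep2, ← AdjoinRoot.modByMonicHom_mk (fm_monic hm)]
  exact congrArg _ (Function.surjInv_eq _ r)

lemma mk2_rep2 (hm : 0 < m) (r : R2 m) : mk2 m (rep2 m r) = r := by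
  rw [rep2_eq_modByMonicHom hm]
  exact AdjoinRoot.mk_leftInverse (fm_monic hm) r

lemma degree_rep2_lt (hm : 0 < m) (r : R2 m) : (rep2 m r).degree < m := by
  rw [rep2, ← degree_fm hm]
  exact degree_modByMonic_lt _ (fm_monic hm)

lemma eq_of_mk2_eq (hm : 0 < m) {p q : (ZMod 2)[X]} (hp : p.degree < m) (hq : q.degree < m)
    (h : mk2 m p = mk2 m q) : p = q :=
  (fm_monic hm).eq_of_mk_eq_of_degree_lt (degree_fm hm ▸ hp) (degree_fm hm ▸ hq) h

lemma mk2_ne_zero (hm : 0 < m) {p : (ZMod 2)[X]} (hp : p.degree < m) (hp0 : p ≠ 0) :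
    mk2 m p ≠ 0 := fun h ↦
  hp0 (eq_of_mk2_eq hm hp (by simp) (h.trans (map_zero _).symm))

lemma X_sub_one_dvd_rep2 (hm : 0 < m) {a : R2 m} (ha : a ∈ Jm m) : X - 1 ∣ rep2 m a := by
  obtain ⟨c, rfl⟩ := Ideal.mem_span_singleton'.1 ha
  obtain ⟨c, rfl⟩ := Ideal.Quotient.mk_surjective c
  have h : fm m ∣ rep2 m (mk2 m (c * (X - 1))) - c * (X - 1) := by
    rw [← Ideal.mem_span_singleton, ← Ideal.Quotient.mk_eq_mk_iff_sub_mem]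
    exact mk2_rep2 hm _
  exact (dvd_iff_dvd_of_dvd_sub ((Dvd.intro _ (X_sub_one_mul_geomPoly m)).trans h)).2
    (dvd_mul_left _ _)

lemma coeff_polyDbl (p : (ZMod 2)[X]) (i : ℕ) :
    (polyDbl p).coeff i = 2 * ((p.coeff i).val : ZMod 4) := by
  simp only [polyDbl, finsetSum_coeff, coeff_C_mul, coeff_X_pow, mul_ite, mul_one, mul_zero,
    Finset.sum_ite_eq, Polynomial.mem_support_iff]
  split_ifs with h
  · rfl
  · simp [not_not.1 h]

lemma polyDbl_injective : Function.Injective polyDbl := fun p q h ↦ by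
  ext i
  have hi := congrArg (coeff · i) h
  simp only [coeff_polyDbl] at hi
  exact (by decide : ∀ u v : ZMod 2, 2 * (u.val : ZMod 4) = 2 * v.val → u = v) _ _ hi

lemma degree_polyDbl_lt {p : (ZMod 2)[X]} (h : p.degree < m) : (polyDbl p).degree < m := by
  rw [degree_lt_iff_coeff_zero] at h ⊢
  intro k hk
  simp [coeff_polyDbl, h k hk]

lemma iota_injective (hm : 0 < m) : Function.Injective (iota m) := by
  have : Nontrivial (ZMod 4) := ZMod.nontrivial_iff.2 (by norm_num)
  intro r s h
  have hdeg (t : R2 m) : (polyDbl (rep2 m t)).degree < (fm4 m).degree :=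
    degree_fm4 hm ▸ degree_polyDbl_lt (degree_rep2_lt hm t)
  have hrep := polyDbl_injective ((fm4_monic hm).eq_of_mk_eq_of_degree_lt (hdeg r) (hdeg s) h)
  rw [← mk2_rep2 hm r, ← mk2_rep2 hm s, hrep]

lemma moduleFinite_R2 (hm : 0 < m) : Module.Finite (ZMod 2) (R2 m) :=
  (AdjoinRoot.powerBasis (fm_monic hm).ne_zero).finite

lemma finrank_R2 (hm : 0 < m) : finrank (ZMod 2) (R2 m) = m := by
  have h := (AdjoinRoot.powerBasis (fm_monic hm).ne_zero).finrank
  rwa [AdjoinRoot.powerBasis_dim, natDegree_fm] at h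

def codeMap (m : ℕ) (a b : R2 m) : R2 m →ₗ[ZMod 2] R2 m × R2 m :=
  (LinearMap.mulRight (ZMod 2) a).prod (LinearMap.mulRight (ZMod 2) b)

lemma codeMap_apply (a b f : R2 m) : codeMap m a b f = (f * a, f * b) := rfl

lemma Cab_eq_image (a b : R2 m) :
    Cab m a b = Prod.map id (iota m) '' (LinearMap.range (codeMap m a b) : Set _) := by
  ext w
  simp [Cab, codeMap_apply, eq_comm]

lemma dimCab_eq (hm : 0 < m) (a b : R2 m) :
    dimCab m a b = m - finrank (ZMod 2) (LinearMap.ker (codeMap m a b)) := by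
  have := moduleFinite_R2 hm
  have : Finite (R2 m) := Module.finite_of_finite (ZMod 2)
  have hinj : Function.Injective (Prod.map (id : R2 m → R2 m) (iota m)) :=
    Function.injective_id.prodMap (iota_injective hm)
  have hrank := LinearMap.finrank_range_add_finrank_ker (codeMap m a b)
  rw [finrank_R2 hm] at hrank
  rw [dimCab, Cab_eq_image, Nat.card_image_of_injective hinj, SetLike.coe_sort_coe,
    Submodule.natCard_eq_two_pow_finrank, Nat.log_pow one_lt_two]
  omega

lemma mk2_mem_ker_codeMap_iff (hm : 0 < m) (a b : R2 m) (F : (ZMod 2)[X]) :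
    mk2 m F ∈ LinearMap.ker (codeMap m a b) ↔ fm m ∣ F * rep2 m a ∧ fm m ∣ F * rep2 m b := by
  have hzero (G : (ZMod 2)[X]) : mk2 m G = 0 ↔ fm m ∣ G := by
    rw [mk2, Ideal.Quotient.eq_zero_iff_mem, Ideal.mem_span_singleton]
  rw [← hzero, ← hzero, map_mul, map_mul, mk2_rep2 hm, mk2_rep2 hm, LinearMap.mem_ker,
    codeMap_apply, Prod.mk_eq_zero]

lemma mk2_mem_ker_codeMap_of_dvd (hm : 0 < m) {a b : R2 m} {p q : (ZMod 2)[X]}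
    (hpq : p * q = fm m) (ha : p ∣ rep2 m a) (hb : p ∣ rep2 m b) :
    mk2 m q ∈ LinearMap.ker (codeMap m a b) := by
  rw [mk2_mem_ker_codeMap_iff hm, ← hpq, mul_comm p]
  exact ⟨mul_dvd_mul_left q ha, mul_dvd_mul_left q hb⟩

lemma ker_codeMap_subset (hm : 0 < m) {a b : R2 m}
    (h : ∀ p, Irreducible p → p ∣ geomPoly m → p ∣ rep2 m a → ¬ p ∣ rep2 m b) :
    (LinearMap.ker (codeMap m a b) : Set (R2 m)) ⊆ {0, mk2 m (geomPoly m)} := by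
  classical
  intro f hf
  rw [SetLike.mem_coe, ← mk2_rep2 hm f, mk2_mem_ker_codeMap_iff hm] at hf
  set A := rep2 m a
  set B := rep2 m b
  have hcop : IsCoprime (geomPoly m) (EuclideanDomain.gcd A B) :=
    isCoprime_of_irreducible_dvd (fun h0 ↦ geomPoly_ne_zero hm h0.1) fun p hp hpg hpd ↦
      h p hp hpg (hpd.trans (EuclideanDomain.gcd_dvd_left A B))
        (hpd.trans (EuclideanDomain.gcd_dvd_right A B))
  have hg : geomPoly m ∣ fm m := Dvd.intro_left _ (X_sub_one_mul_geomPoly m)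
  have hdvd : geomPoly m ∣ rep2 m f * EuclideanDomain.gcd A B := by
    rw [EuclideanDomain.gcd_eq_gcd_ab, mul_add, ← mul_assoc, ← mul_assoc]
    exact dvd_add (dvd_mul_of_dvd_left (hg.trans hf.1) _) (dvd_mul_of_dvd_left (hg.trans hf.2) _)
  rcases eq_zero_or_eq_geomPoly_of_dvd hm (degree_rep2_lt hm f)
    (hcop.dvd_of_dvd_mul_right hdvd) with hF0 | hFg
  · left
    rw [← mk2_rep2 hm f, hF0, map_zero]
  · right
    rw [← mk2_rep2 hm f, hFg, Set.mem_singleton_iff]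

lemma two_le_finrank_ker_codeMap (hm : Odd m) {a b : R2 m} (ha : X - 1 ∣ rep2 m a)
    (hb : X - 1 ∣ rep2 m b) {p : (ZMod 2)[X]} (hp : Irreducible p) (hpg : p ∣ geomPoly m)
    (hpa : p ∣ rep2 m a) (hpb : p ∣ rep2 m b) :
    2 ≤ finrank (ZMod 2) (LinearMap.ker (codeMap m a b)) := by
  have hmpos := hm.pos
  have := moduleFinite_R2 hmpos
  have : Finite (R2 m) := Module.finite_of_finite (ZMod 2)
  obtain ⟨c, hc⟩ := hpg
  have hc0 : c ≠ 0 := by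
    rintro rfl
    exact geomPoly_ne_zero hmpos (by rw [hc, mul_zero])
  have hlt := degree_geomPoly_lt hmpos
  have hdeg : ((X - 1) * c).degree < (m : WithBot ℕ) := by
    refine lt_of_le_of_lt ?_ hlt
    rw [hc, degree_mul, degree_mul, ← C_1, degree_X_sub_C]
    exact add_le_add_left (Nat.WithBot.one_le_iff_zero_lt.2 (degree_pos_of_irreducible hp)) _
  have hne : geomPoly m ≠ (X - 1) * c := fun h ↦
    not_X_sub_one_dvd_geomPoly hm (h ▸ dvd_mul_right _ _)
  exact Submodule.two_le_finrank_of_mem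
    (mk2_mem_ker_codeMap_of_dvd hmpos (X_sub_one_mul_geomPoly m) ha hb)
    (mk2_mem_ker_codeMap_of_dvd hmpos (by rw [← X_sub_one_mul_geomPoly, hc]; ring) hpa hpb)
    (mk2_ne_zero hmpos hlt (geomPoly_ne_zero hmpos))
    (mk2_ne_zero hmpos hdeg (mul_ne_zero (by simpa using X_sub_C_ne_zero (1 : ZMod 2)) hc0))
    (fun h ↦ hne (eq_of_mk2_eq hmpos hlt hdeg h))

end Z2Z4Code

open Z2Z4Code

theorem statement3_general (m : ℕ) (hm : Odd m)
    (a b : R2 m) (ha : a ∈ Jm m) (hb : b ∈ Jm m) :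
    dimCab m a b ≤ m - 1 ∧
    (dimCab m a b < m - 1 ↔ ∃ p : Polynomial (ZMod 2),
      Irreducible p ∧ p ∣ geomPoly m ∧ p ∣ rep2 m a ∧ p ∣ rep2 m b) := by
  have hmpos := hm.pos
  have := moduleFinite_R2 hmpos
  have : Finite (R2 m) := Module.finite_of_finite (ZMod 2)
  have hXa := X_sub_one_dvd_rep2 hmpos ha
  have hXb := X_sub_one_dvd_rep2 hmpos hb
  have hone : 1 ≤ finrank (ZMod 2) (LinearMap.ker (codeMap m a b)) :=
    Submodule.one_le_finrank_iff.2 <| (Submodule.ne_bot_iff _).2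
      ⟨_, mk2_mem_ker_codeMap_of_dvd hmpos (X_sub_one_mul_geomPoly m) hXa hXb,
        mk2_ne_zero hmpos (degree_geomPoly_lt hmpos) (geomPoly_ne_zero hmpos)⟩
  have htwo : 2 ≤ finrank (ZMod 2) (LinearMap.ker (codeMap m a b)) ↔ ∃ p : (ZMod 2)[X],
      Irreducible p ∧ p ∣ geomPoly m ∧ p ∣ rep2 m a ∧ p ∣ rep2 m b := by
    refine ⟨fun h2 ↦ ?_, fun ⟨p, hp, hpg, hpa, hpb⟩ ↦
      two_le_finrank_ker_codeMap hm hXa hXb hp hpg hpa hpb⟩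
    by_contra hno
    push Not at hno
    have := Submodule.finrank_le_one_of_subset_pair (ker_codeMap_subset hmpos hno)
    omega
  have hle := finrank_R2 hmpos ▸ Submodule.finrank_le (LinearMap.ker (codeMap m a b))
  rw [dimCab_eq hmpos, ← htwo]
  omega

/-- For `a, b ∈ J_m`: `dim C_{a,b} ≤ m - 1`, and `dim C_{a,b} < m - 1`
iff some irreducible factor `p` of `X^{m-1} + ⋯ + X + 1` over `Z/2` divides both `a` and `b`
(as polynomial representatives). -/
theorem statement3 (m : ℕ) (hm : Odd m) (hmpos : 0 < m)
    (a b : R2 m) (ha : a ∈ Jm m) (hb : b ∈ Jm m) :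
    dimCab m a b ≤ m - 1 ∧
    (dimCab m a b < m - 1 ↔ ∃ p : Polynomial (ZMod 2),
      Irreducible p ∧ p ∣ geomPoly m ∧ p ∣ rep2 m a ∧ p ∣ rep2 m b) :=
  statement3_general m hm a b ha hb

end
end

section
/- Let m be an odd positive integer and let ℓ_m be the minimal degree of the irreducible factors in (Z/2)[X] of (X^m − 1)/(X − 1). Then every nonzero ideal of R_m contained in J_m has dimension over Z/2 at least ℓ_m. -/
open Polynomial

noncomputable section

/-!
Ideals of `K[X]/(F)` are generated by the images of divisors `g` of `F`; if the ideal is nonzero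
and lies in `⟨X - 1⟩`, then `X - 1 ∣ g` and the cofactor `F / g` is a nonunit divisor of
`F / (X - 1)`. For an irreducible factor `p` of this cofactor, `q = F / p` is a multiple of `g`, so
the ideal contains `z q` for every `z` of degree `< deg p`, and these are independent modulo `F`.
-/

theorem Ideal.exists_dvd_eq_span_mk {R : Type*} [CommRing R] [IsPrincipalIdealRing R] (F : R)
    (I : Ideal (R ⧸ Ideal.span {F})) :
    ∃ g, g ∣ F ∧ I = Ideal.span {Ideal.Quotient.mk _ g} := by
  set P := I.comap (Ideal.Quotient.mk (Ideal.span {F}))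
  refine ⟨Submodule.IsPrincipal.generator P, ?_, ?_⟩
  · rw [← Ideal.mem_span_singleton, Ideal.span_singleton_generator]
    simp [P]
  · rw [← Set.image_singleton, ← Ideal.map_span, Ideal.span_singleton_generator,
      Ideal.map_comap_of_surjective _ Ideal.Quotient.mk_surjective]

theorem Ideal.dvd_of_mk_mem_span_mk {R : Type*} [CommRing R] {F a g : R} (haF : a ∣ F)
    (hg : Ideal.Quotient.mk (Ideal.span {F}) g ∈ Ideal.span {Ideal.Quotient.mk _ a}) : a ∣ g := by
  obtain ⟨c, hc⟩ := Ideal.mem_span_singleton'.mp hg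
  obtain ⟨z, rfl⟩ := Ideal.Quotient.mk_surjective c
  rw [← map_mul, Ideal.Quotient.eq, Ideal.mem_span_singleton] at hc
  exact (dvd_sub_right (dvd_mul_left a z)).mp (haF.trans hc)

theorem exists_irreducible_dvd_of_not_dvd {R : Type*} [CommRing R] [IsDomain R] [WfDvdMonoid R]
    {F a G g : R} (hF : a * G = F) (hF0 : F ≠ 0) (hag : a ∣ g) (hgF : g ∣ F) (hFg : ¬ F ∣ g) :
    ∃ p q, Irreducible p ∧ p ∣ G ∧ p * q = F ∧ g ∣ q := by
  obtain ⟨h, rfl⟩ := hgF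
  obtain ⟨g', rfl⟩ := hag
  have hh0 : h ≠ 0 := right_ne_zero_of_mul hF0
  have hhu : ¬ IsUnit h := fun hu => hFg (hu.mul_right_dvd.mpr dvd_rfl)
  obtain ⟨p, hp, h', rfl⟩ := WfDvdMonoid.exists_irreducible_factor hhu hh0
  refine ⟨p, a * g' * h', hp, ⟨g' * h', ?_⟩, by ring, dvd_mul_right _ _⟩
  refine mul_left_cancel₀ (left_ne_zero_of_mul (left_ne_zero_of_mul hF0)) ?_
  rw [hF]
  ring

namespace Polynomial

variable {K : Type*} [Field K]

theorem natDegree_le_finrank_of_mk_mem {F p q : K[X]} (hF : F ≠ 0) (hpq : p * q = F)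
    (I : Ideal (K[X] ⧸ Ideal.span {F})) (hqI : Ideal.Quotient.mk _ q ∈ I) :
    p.natDegree ≤ Module.finrank K I := by
  have : Module.Finite K (K[X] ⧸ Ideal.span {F}) := .of_basis (AdjoinRoot.powerBasis hF).basis
  have hp0 : p ≠ 0 := left_ne_zero_of_mul (hpq ▸ hF)
  have hq0 : q ≠ 0 := right_ne_zero_of_mul (hpq ▸ hF)
  let φ : K[X]_p.natDegree →ₗ[K] I.restrictScalars K :=
    LinearMap.codRestrict (I.restrictScalars K)
      ((Ideal.Quotient.mkₐ K _).toLinearMap ∘ₗ LinearMap.mulRight K q ∘ₗ (K[X]_p.natDegree).subtype)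
      fun z => by simpa using I.mul_mem_left (Ideal.Quotient.mk _ z) hqI
  have hφ : Function.Injective φ := by
    refine (injective_iff_map_eq_zero φ).mpr fun ⟨z, hz⟩ hφz => ?_
    have hFz : F ∣ z * q := by
      rw [← Ideal.mem_span_singleton, ← Ideal.Quotient.eq_zero_iff_mem]
      exact congrArg Subtype.val hφz
    have hpz : p ∣ z := (mul_dvd_mul_iff_right hq0).mp (hpq ▸ hFz)
    ext1
    refine eq_zero_of_dvd_of_degree_lt hpz ?_
    rwa [degree_eq_natDegree hp0, ← mem_degreeLT]
  have := LinearMap.finrank_le_finrank_of_injective hφ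
  rwa [Module.finrank_eq_card_basis (degreeLT.basis K _), Fintype.card_fin] at this

theorem exists_irreducible_dvd_natDegree_le_finrank {F a G : K[X]} (hF : a * G = F) (hF0 : F ≠ 0)
    (I : Ideal (K[X] ⧸ Ideal.span {F})) (hI : I ≤ Ideal.span {Ideal.Quotient.mk _ a})
    (hI0 : I ≠ ⊥) :
    ∃ p, Irreducible p ∧ p ∣ G ∧ p.natDegree ≤ Module.finrank K I := by
  obtain ⟨g, hgF, rfl⟩ := Ideal.exists_dvd_eq_span_mk F I
  have hFg : ¬ F ∣ g := by
    rwa [Ne, Ideal.span_singleton_eq_bot, Ideal.Quotient.eq_zero_iff_mem,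
      Ideal.mem_span_singleton] at hI0
  have hag : a ∣ g :=
    Ideal.dvd_of_mk_mem_span_mk ⟨G, hF.symm⟩ (hI (Ideal.mem_span_singleton_self _))
  obtain ⟨p, q, hp, hpG, hpq, hgq⟩ := exists_irreducible_dvd_of_not_dvd hF hF0 hag hgF hFg
  exact ⟨p, hp, hpG, natDegree_le_finrank_of_mk_mem hF0 hpq _
    (Ideal.mem_span_singleton.mpr (_root_.map_dvd _ hgq))⟩

end Polynomial

theorem statement4_general (m : ℕ) (hmpos : 0 < m)
    (I : Ideal (R2 m)) (hI : I ≤ Jm m) (hI0 : I ≠ ⊥) :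
    ell m ≤ Module.finrank (ZMod 2) I := by
  have hF0 : fm m ≠ 0 := by simpa [fm] using X_pow_sub_C_ne_zero hmpos (1 : ZMod 2)
  obtain ⟨p, hp, hpG, hpI⟩ :=
    exists_irreducible_dvd_natDegree_le_finrank (mul_geom_sum X m) hF0 I hI hI0
  calc ell m ≤ p.natDegree := Nat.sInf_le ⟨p, hp, hpG, rfl⟩
    _ ≤ Module.finrank (ZMod 2) I := hpI

/-- Every nonzero ideal of `R_m` contained in `J_m` has `Z/2`-dimension
at least `ℓ_m`. -/
theorem statement4 (m : ℕ) (hm : Odd m) (hmpos : 0 < m)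
    (I : Ideal (R2 m)) (hI : I ≤ Jm m) (hI0 : I ≠ ⊥) :
    ell m ≤ Module.finrank (ZMod 2) I :=
  statement4_general m hmpos I hI hI0

end
end

section
/- Let m, d, ℓ be positive integers with ℓ ≤ d < m. Then the sum of binomial coefficients ∑_{i=1}^{⌊d/ℓ⌋} C(m, i) is at most m^{d/ℓ}, where the exponent d/ℓ is a real number and ⌊d/ℓ⌋ denotes the floor of d/ℓ. -/
lemma aux_sum_choose (m : ℕ) (hm : 2 ≤ m) :
    ∀ k, 1 ≤ k → ∑ i ∈ Finset.Icc 1 k, m.choose i ≤ m ^ k := by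
  intro k hk
  induction k with
  | zero => omega
  | succ n ih =>
    rcases Nat.eq_or_lt_of_le hk with h | h
    · simp [← h]
    · have hn : 1 ≤ n := by omega
      have hsum := ih hn
      rw [Finset.sum_Icc_succ_top (by omega : 1 ≤ n + 1)]
      have h2 : 2 * m.choose (n + 1) ≤ m ^ (n + 1) := by
        calc 2 * m.choose (n + 1) ≤ Nat.factorial (n + 1) * m.choose (n + 1) := by
              have : 2 ≤ Nat.factorial (n + 1) := by
                calc 2 = Nat.factorial 2 := rfl
                  _ ≤ Nat.factorial (n + 1) := Nat.factorial_le (by omega)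
              exact Nat.mul_le_mul_right _ this
          _ = m.descFactorial (n + 1) := (Nat.descFactorial_eq_factorial_mul_choose m (n + 1)).symm
          _ ≤ m ^ (n + 1) := Nat.descFactorial_le_pow m (n + 1)
      have hpow : m ^ n + m ^ n ≤ m ^ (n + 1) := by
        have : m ^ n * 2 ≤ m ^ n * m := Nat.mul_le_mul_left _ hm
        rw [pow_succ]; omega
      have hc : m.choose (n + 1) ≤ m ^ (n + 1) - m ^ n := by
        have hle : m ^ n ≤ m ^ (n + 1) := Nat.pow_le_pow_right (by omega) (by omega)
        omega
      omega

/-- For positive integers `ℓ ≤ d < m`,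
`∑_{i=1}^{⌊d/ℓ⌋} C(m,i) ≤ m^{d/ℓ}` (real exponent `d/ℓ`). -/
theorem statement6 (m d ℓ : ℕ) (hm : 0 < m) (hd : 0 < d) (hℓ : 0 < ℓ)
    (h1 : ℓ ≤ d) (h2 : d < m) :
    ((∑ i ∈ Finset.Icc 1 (d / ℓ), m.choose i : ℕ) : ℝ)
      ≤ (m : ℝ) ^ ((d : ℝ) / (ℓ : ℝ)) := by
  have hm2 : 2 ≤ m := by omega
  have hk1 : 1 ≤ d / ℓ := Nat.one_le_div_iff hℓ |>.mpr h1
  have hnat := aux_sum_choose m hm2 (d / ℓ) hk1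
  have hcast : ((∑ i ∈ Finset.Icc 1 (d / ℓ), m.choose i : ℕ) : ℝ) ≤ (m : ℝ) ^ (d / ℓ : ℕ) := by
    exact_mod_cast hnat
  refine hcast.trans ?_
  rw [← Real.rpow_natCast (m : ℝ) (d / ℓ)]
  apply Real.rpow_le_rpow_of_exponent_le (by exact_mod_cast Nat.one_le_iff_ne_zero.mpr (by omega))
  exact_mod_cast Nat.cast_div_le
end

section
/- Let m be an odd positive integer and let (X^m − 1)/(X − 1) = p_1(X) ⋯ p_h(X) be the factorization into distinct irreducible polynomials in (Z/2)[X], with d_j = deg p_j(X). Then the number of pairs (a(X), b(X)) ∈ J_m × J_m such that gcd(a(X), b(X), X^m − 1) = X − 1 (equivalently, no p_j divides both a(X) and b(X)) equals 2^{2(m−1)} · ∏_{j=1}^{h} (1 − 2^{−2 d_j}). -/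
open Polynomial

noncomputable section

/-! By the Chinese remainder theorem, `X^m - 1 = (X - 1) p_1 ⋯ p_h` with pairwise coprime factors
gives `R_m ≅ 𝔽₂ × ∏_j 𝔽₂[X]/⟨p_j⟩`, the `j`-th factor being a field with `2^{d_j}` elements.
As `X^m - 1` is squarefree, `gcd(a, b, X^m - 1) = X - 1` says exactly that the coordinate pair of
`(a, b)` vanishes in the first factor and in no other one. This is a condition factor by factor,
so the count is `∏_j (2^{2 d_j} - 1)`. -/
section QuotientSpan

variable {R : Type*} {ι : Type*} [Fintype ι]

theorem associated_gcd_gcd_prod_iff [EuclideanDomain R] [DecidableEq R] [DecidableEq ι]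
    {q : ι → R} (hirr : ∀ i, Irreducible (q i)) (hcop : Pairwise (Function.onFun IsCoprime q))
    (i₀ : ι) (a b : R) :
    Associated (EuclideanDomain.gcd a (EuclideanDomain.gcd b (∏ i, q i))) (q i₀) ↔
      ∀ i, (q i ∣ a ∧ q i ∣ b ↔ i = i₀) := by
  set g := EuclideanDomain.gcd a (EuclideanDomain.gcd b (∏ i, q i))
  have hga : g ∣ a := EuclideanDomain.gcd_dvd_left _ _
  have hgb : g ∣ b := (EuclideanDomain.gcd_dvd_right _ _).trans (EuclideanDomain.gcd_dvd_left _ _)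
  have hgq : g ∣ ∏ i, q i :=
    (EuclideanDomain.gcd_dvd_right _ _).trans (EuclideanDomain.gcd_dvd_right _ _)
  have hdvd_g : ∀ i, q i ∣ g ↔ q i ∣ a ∧ q i ∣ b := fun i =>
    ⟨fun h => ⟨h.trans hga, h.trans hgb⟩, fun ⟨ha, hb⟩ => EuclideanDomain.dvd_gcd ha
      (EuclideanDomain.dvd_gcd hb (Finset.dvd_prod_of_mem _ (Finset.mem_univ i)))⟩
  have hdvd_q : ∀ i, q i ∣ q i₀ ↔ i = i₀ := fun i =>
    ⟨fun h => by_contra fun hne => (hirr i).not_isUnit ((hcop hne).isUnit_of_dvd' dvd_rfl h),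
      fun h => h ▸ dvd_rfl⟩
  constructor
  · intro hg i
    rw [← hdvd_g, hg.dvd_iff_dvd_right, hdvd_q]
  · intro h
    refine associated_of_dvd_dvd ?_ ((hdvd_g i₀).mpr ((h i₀).mpr rfl))
    -- `g` is coprime to every other factor, hence divides the remaining one
    have hcop_g : IsCoprime g (∏ i ∈ Finset.univ.erase i₀, q i) :=
      IsCoprime.prod_right fun i hi => ((hirr i).coprime_iff_not_dvd.mpr fun hig =>
        Finset.ne_of_mem_erase hi ((h i).mp ((hdvd_g i).mp hig))).symm
    rw [← Finset.mul_prod_erase _ _ (Finset.mem_univ i₀)] at hgq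
    exact hcop_g.dvd_of_dvd_mul_right hgq

variable [CommRing R] {f : R} {q : ι → R}

def quotientSpanEquivPi (hq : Pairwise (Function.onFun IsCoprime q)) (hf : ∏ i, q i = f) :
    R ⧸ Ideal.span {f} ≃+* ∀ i, R ⧸ Ideal.span {q i} :=
  (Ideal.quotEquivOfEq (by rw [← hf, Ideal.iInf_span_singleton hq])).trans
    (Ideal.quotientInfRingEquivPiQuotient _ fun _ _ hij =>
      (Ideal.isCoprime_span_singleton_iff _ _).mpr (hq hij))

theorem quotientSpanEquivPi_mk_eq_zero_iff (hq : Pairwise (Function.onFun IsCoprime q))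
    (hf : ∏ i, q i = f) (x : R) (i : ι) :
    quotientSpanEquivPi hq hf (Ideal.Quotient.mk _ x) i = 0 ↔ q i ∣ x := by
  rw [← Ideal.mem_span_singleton, ← Ideal.Quotient.eq_zero_iff_mem]
  rfl

end QuotientSpan

theorem finite_quotient_span {K : Type*} [Field K] [Finite K] {f : K[X]} (hf : f ≠ 0) :
    Finite (K[X] ⧸ Ideal.span {f}) :=
  have : Module.Finite K (K[X] ⧸ Ideal.span {f}) := (AdjoinRoot.powerBasis hf).finite
  Module.finite_of_finite K

theorem natCard_quotient_span_eq_pow {K : Type*} [Field K] {f : K[X]} (hf : f ≠ 0) :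
    Nat.card (K[X] ⧸ Ideal.span {f}) = Nat.card K ^ f.natDegree := by
  have : Module.Finite K (K[X] ⧸ Ideal.span {f}) := (AdjoinRoot.powerBasis hf).finite
  rw [Module.natCard_eq_pow_finrank (K := K), finrank_quotient_span_eq_natDegree]

theorem natCard_pi_eq_zero_iff_eq_none {ι : Type*} [Fintype ι] (A : Option ι → Type*)
    [∀ i, Zero (A i)] [∀ i, Finite (A i)] :
    Nat.card {x : ∀ i, A i // ∀ i, (x i = 0 ↔ i = none)} = ∏ j, (Nat.card (A (some j)) - 1) := by
  rw [Nat.card_congr (Equiv.subtypePiEquivPi (p := fun i y => (y = 0 ↔ i = none))), Nat.card_pi,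
    Fintype.prod_option]
  simp only [iff_true, reduceCtorEq, iff_false, Nat.card_unique, one_mul]
  refine Finset.prod_congr rfl fun j _ => ?_
  classical
  have := Fintype.ofFinite (A (some j))
  simp only [Nat.card_eq_fintype_card, Fintype.card_subtype_compl, Fintype.card_subtype_eq]

instance : Subsingleton (ZMod 2)[X]ˣ where
  allEq u v := by
    have hone : ∀ w : (ZMod 2)[X]ˣ, w = 1 := fun w => by
      obtain ⟨r, hr, hC⟩ := Polynomial.isUnit_iff.mp w.isUnit
      rw [isUnit_iff_eq_one] at hr
      ext1
      rw [← hC, hr, map_one, Units.val_one]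
    rw [hone u, hone v]

theorem irreducible_X_sub_one : Irreducible (X - 1 : (ZMod 2)[X]) := by
  simpa using Polynomial.irreducible_X_sub_C (1 : ZMod 2)

theorem fm_eq_mul_geomPoly (m : ℕ) : fm m = (X - 1) * geomPoly m := by
  rw [fm, geomPoly, mul_comm, geom_sum_mul]

theorem X_sub_one_not_dvd_geomPoly {m : ℕ} (hm : Odd m) :
    ¬ (X - 1 : (ZMod 2)[X]) ∣ geomPoly m := by
  rw [← Polynomial.C_1, Polynomial.dvd_iff_isRoot, IsRoot, geomPoly]
  simp only [eval_finsetSum, eval_pow, eval_X, one_pow, Finset.sum_const, Finset.card_range,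
    nsmul_eq_mul, mul_one]
  rw [(ZMod.natCast_eq_one_iff_odd).mpr hm]
  exact one_ne_zero

theorem natDegree_geomPoly {m : ℕ} (hm : 0 < m) : (geomPoly m).natDegree = m - 1 := by
  have hmonic : (geomPoly m).Monic := monic_geom_sum_X hm.ne'
  have hdeg := congrArg natDegree (fm_eq_mul_geomPoly m)
  rw [fm, ← Polynomial.C_1, natDegree_X_pow_sub_C, natDegree_mul (X_sub_C_ne_zero 1)
    hmonic.ne_zero, natDegree_X_sub_C] at hdeg
  omega

theorem mk_rep2 {m : ℕ} (r : R2 m) : Ideal.Quotient.mk _ (rep2 m r) = r := by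
  rw [rep2, modByMonic_eq_sub_mul_div, map_sub, Ideal.Quotient.eq_zero_iff_mem.mpr
    (Ideal.mem_span_singleton.mpr (dvd_mul_right (fm m) _)), sub_zero]
  exact Function.surjInv_eq _ r

theorem mem_Jm_of_X_sub_one_dvd {m : ℕ} {r : R2 m} (h : X - 1 ∣ rep2 m r) :
    r ∈ Jm m := by
  obtain ⟨c, hc⟩ := h
  rw [← mk_rep2 r, hc, map_mul, Jm]
  exact Ideal.mem_span_singleton.mpr ⟨mk2 m c, rfl⟩

theorem card_pairs_gcd_eq_X_sub_one {m : ℕ} (hm : Odd m) {h : ℕ} {p : Fin h → (ZMod 2)[X]}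
    (hirr : ∀ j, Irreducible (p j)) (hdist : Function.Injective p)
    (hfact : ∏ j, p j = geomPoly m) :
    Nat.card {w : R2 m × R2 m // w.1 ∈ Jm m ∧ w.2 ∈ Jm m ∧
        EuclideanDomain.gcd (rep2 m w.1) (EuclideanDomain.gcd (rep2 m w.2) (fm m)) = X - 1} =
      ∏ j, (2 ^ (2 * (p j).natDegree) - 1) := by
  let q : Option (Fin h) → (ZMod 2)[X] := Option.elim' (X - 1) p
  have hirr_q : ∀ i, Irreducible (q i) := by
    rintro (_ | j)
    exacts [irreducible_X_sub_one, hirr j]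
  have hq_inj : Function.Injective q := by
    have hne : ∀ j, p j ≠ X - 1 := fun j hj =>
      X_sub_one_not_dvd_geomPoly hm (hj ▸ hfact ▸ Finset.dvd_prod_of_mem p (Finset.mem_univ j))
    rintro (_ | i) (_ | j) hij
    · rfl
    · exact absurd hij.symm (hne j)
    · exact absurd hij (hne i)
    · exact congrArg some (hdist hij)
  have hcop : Pairwise (Function.onFun IsCoprime q) := fun i j hij =>
    (hirr_q i).coprime_iff_not_dvd.mpr fun hdvd =>
      hij (hq_inj (associated_iff_eq.mp ((hirr_q i).associated_of_dvd (hirr_q j) hdvd)))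
  have hprod : ∏ i, q i = fm m := by
    rw [Fintype.prod_option, fm_eq_mul_geomPoly, ← hfact]
    rfl
  let Φ := quotientSpanEquivPi hcop hprod
  have hΦ : ∀ (r : R2 m) i, Φ r i = 0 ↔ q i ∣ rep2 m r := fun r i => by
    rw [← quotientSpanEquivPi_mk_eq_zero_iff hcop hprod, mk_rep2]
  have hcond : ∀ w : R2 m × R2 m, (w.1 ∈ Jm m ∧ w.2 ∈ Jm m ∧
      EuclideanDomain.gcd (rep2 m w.1) (EuclideanDomain.gcd (rep2 m w.2) (fm m)) = X - 1) ↔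
      ∀ i, ((Φ w.1 i, Φ w.2 i) = 0 ↔ i = none) := fun w => by
    have hgcd := associated_gcd_gcd_prod_iff hirr_q hcop none (rep2 m w.1) (rep2 m w.2)
    rw [hprod, associated_iff_eq] at hgcd
    rw [show (X - 1 : (ZMod 2)[X]) = q none from rfl, hgcd]
    simp only [Prod.mk_eq_zero, hΦ]
    exact ⟨fun h => h.2.2, fun h => ⟨mem_Jm_of_X_sub_one_dvd ((h none).mpr rfl).1,
      mem_Jm_of_X_sub_one_dvd ((h none).mpr rfl).2, h⟩⟩
  have := fun i => finite_quotient_span (hirr_q i).ne_zero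
  rw [Nat.card_congr (((Φ.toEquiv.prodCongr Φ.toEquiv).trans
    (Equiv.arrowProdEquivProdArrow _ _ _).symm).subtypeEquiv
    (q := fun x => ∀ i, (x i = 0 ↔ i = none)) hcond),
    natCard_pi_eq_zero_iff_eq_none]
  refine Finset.prod_congr rfl fun j _ => ?_
  rw [Nat.card_prod, natCard_quotient_span_eq_pow (hirr_q (some j)).ne_zero, Nat.card_zmod,
    ← pow_add, ← two_mul]
  rfl

theorem natCast_two_pow_sub_one (n : ℕ) :
    ((2 ^ n - 1 : ℕ) : ℝ) = 2 ^ n * (1 - (2 : ℝ) ^ (-(n : ℝ))) := by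
  rw [Nat.cast_sub Nat.one_le_two_pow, Real.rpow_neg zero_le_two, Real.rpow_natCast, mul_sub,
    mul_inv_cancel₀ (by positivity)]
  push_cast
  ring

theorem statement13_general (m : ℕ) (hm : Odd m)
    (h : ℕ) (p : Fin h → Polynomial (ZMod 2))
    (hirr : ∀ j, Irreducible (p j)) (hdist : Function.Injective p)
    (hfact : ∏ j, p j = geomPoly m) :
    (Nat.card {w : R2 m × R2 m // w.1 ∈ Jm m ∧ w.2 ∈ Jm m ∧
        EuclideanDomain.gcd (rep2 m w.1) (EuclideanDomain.gcd (rep2 m w.2) (fm m))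
          = X - 1} : ℝ)
      = (2 : ℝ) ^ (2 * (m - 1) : ℕ) *
          ∏ j, (1 - (2 : ℝ) ^ (-(2 * ((p j).natDegree : ℝ)))) := by
  have hdeg : ∑ j, (p j).natDegree = m - 1 := by
    rw [← natDegree_prod _ _ fun j _ => (hirr j).ne_zero, hfact, natDegree_geomPoly hm.pos]
  rw [card_pairs_gcd_eq_X_sub_one hm hirr hdist hfact, ← hdeg, Finset.mul_sum,
    ← Finset.prod_pow_eq_pow_sum, ← Finset.prod_mul_distrib, Nat.cast_prod]
  refine Finset.prod_congr rfl fun j _ => ?_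
  rw [natCast_two_pow_sub_one]
  push_cast
  rfl

/-- If `(X^m-1)/(X-1) = p_1 ⋯ p_h` with distinct irreducible `p_j` of
degrees `d_j` over `Z/2`, then the number of pairs `(a,b) ∈ J_m × J_m` with
`gcd(a, b, X^m - 1) = X - 1` equals `2^{2(m-1)} · ∏_j (1 - 2^{-2 d_j})`. -/
theorem statement13 (m : ℕ) (hm : Odd m) (hmpos : 0 < m)
    (h : ℕ) (p : Fin h → Polynomial (ZMod 2))
    (hirr : ∀ j, Irreducible (p j)) (hdist : Function.Injective p)
    (hfact : ∏ j, p j = geomPoly m) :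
    (Nat.card {w : R2 m × R2 m // w.1 ∈ Jm m ∧ w.2 ∈ Jm m ∧
        EuclideanDomain.gcd (rep2 m w.1) (EuclideanDomain.gcd (rep2 m w.2) (fm m))
          = X - 1} : ℝ)
      = (2 : ℝ) ^ (2 * (m - 1) : ℕ) *
          ∏ j, (1 - (2 : ℝ) ^ (-(2 * ((p j).natDegree : ℝ)))) :=
  statement13_general m hm h p hirr hdist hfact

end
end
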